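/- The minimal average volume property holds with respect to an arbitrary measure: let 0 < δ < 1 and let ν be any (σ-finite) measure on Δ_k. Let C* be a minimal-volume confidence region and C any confidence region at level 1−δ, with all sets C*(p̂) and C(p̂) ν-measurable. Then Σ_{p̂ ∈ Δ_{k,n}} ν(C*(p̂)) ≤ Σ_{p̂ ∈ Δ_{k,n}} ν(C(p̂)). -/

import Mathlib

open MeasureTheory Finset
open scoped ENNReal Classical

noncomputable section

/-- The discrete simplex of empirical count vectors from `n` samples over `k` categories. -/
def discSimplex (k n : ℕ) : Finset (Fin k → ℕ) :=
  (Fintype.piFinset fun _ : Fin k => Finset.range (n + 1)).filter fun c => ∑ i, c i = n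

/-- The probability simplex `Δ_k ⊆ ℝ^k`. -/
def probSimplex (k : ℕ) : Set (EuclideanSpace ℝ (Fin k)) :=
  {p | (∀ i, 0 ≤ p i) ∧ ∑ i, p i = 1}

/-- Multinomial probability of observing the empirical count vector `c` under parameter `p`. -/
def multProb (k : ℕ) (p : EuclideanSpace ℝ (Fin k)) (c : Fin k → ℕ) : ℝ :=
  (Nat.multinomial Finset.univ c : ℝ) * ∏ i, p i ^ c i

/-- Probability of a set of empirical count vectors under parameter `p`. -/
def Pmass (k : ℕ) (p : EuclideanSpace ℝ (Fin k)) (S : Finset (Fin k → ℕ)) : ℝ :=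
  ∑ c ∈ S, multProb k p c


lemma discSimplex_eq (k n : ℕ) : discSimplex k n = Finset.piAntidiag Finset.univ n := by
  ext c
  simp only [discSimplex, mem_filter, Fintype.mem_piFinset, mem_range, mem_piAntidiag,
    mem_univ, implies_true, and_true]
  constructor
  · rintro ⟨-, h⟩; exact h
  · intro h
    refine ⟨fun i => ?_, h⟩
    have hle : c i ≤ ∑ j, c j := Finset.single_le_sum (fun _ _ => Nat.zero_le _) (mem_univ i)
    rw [h] at hle
    omega

lemma Pmass_total (k n : ℕ) (p : EuclideanSpace ℝ (Fin k)) (hp : p ∈ probSimplex k) :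
    Pmass k p (discSimplex k n) = 1 := by
  have h := Finset.sum_pow_eq_sum_piAntidiag (Finset.univ : Finset (Fin k)) (fun i => p i) n
  rw [hp.2, one_pow] at h
  rw [Pmass, discSimplex_eq]
  simp only [multProb]
  exact h.symm

/-- Minimal average volume with respect to an arbitrary (σ-finite) measure `ν` on the simplex. -/
theorem minimal_average_volume_general (k n : ℕ) (hk : 2 ≤ k) (hn : 1 ≤ n)
    (δ : ℝ) (hδ0 : 0 < δ) (hδ1 : δ < 1)
    -- an arbitrary σ-finite measure on the simplex
    (ν : Measure (EuclideanSpace ℝ (Fin k))) [SigmaFinite ν]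
    -- the covering collections `S*(p)` defining the minimal-volume region
    (Sstar : EuclideanSpace ℝ (Fin k) → Finset (Fin k → ℕ))
    (hSsub : ∀ p ∈ probSimplex k, Sstar p ⊆ discSimplex k n)
    (hSmass : ∀ p ∈ probSimplex k, 1 - δ ≤ Pmass k p (Sstar p))
    (hSmin : ∀ p ∈ probSimplex k, ∀ T ⊆ discSimplex k n,
      1 - δ ≤ Pmass k p T → (Sstar p).card ≤ T.card)
    -- an arbitrary confidence region `C` at level `1-δ`
    (C : (Fin k → ℕ) → Set (EuclideanSpace ℝ (Fin k)))
    (hCsub : ∀ c ∈ discSimplex k n, C c ⊆ probSimplex k)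
    (hCconf : ∀ p ∈ probSimplex k,
      Pmass k p ((discSimplex k n).filter fun c => p ∉ C c) ≤ δ)
    -- measurability of all the regions involved
    (hCstarMeas : ∀ c ∈ discSimplex k n,
      MeasurableSet {p : EuclideanSpace ℝ (Fin k) | p ∈ probSimplex k ∧ c ∈ Sstar p})
    (hCmeas : ∀ c ∈ discSimplex k n, MeasurableSet (C c)) :
    ∑ c ∈ discSimplex k n,
        ν {p : EuclideanSpace ℝ (Fin k) | p ∈ probSimplex k ∧ c ∈ Sstar p}
      ≤ ∑ c ∈ discSimplex k n, ν (C c) := by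
  set D := discSimplex k n with hD
  set A : (Fin k → ℕ) → Set (EuclideanSpace ℝ (Fin k)) :=
    fun c => {p : EuclideanSpace ℝ (Fin k) | p ∈ probSimplex k ∧ c ∈ Sstar p} with hA
  have h1 : ∑ c ∈ D, ν (A c) = ∫⁻ p, (∑ c ∈ D, (A c).indicator 1 p) ∂ν := by
    rw [lintegral_finset_sum _ (fun c hc => measurable_one.indicator (hCstarMeas c hc))]
    exact Finset.sum_congr rfl fun c hc => (lintegral_indicator_one (hCstarMeas c hc)).symm
  have h2 : ∑ c ∈ D, ν (C c) = ∫⁻ p, (∑ c ∈ D, (C c).indicator 1 p) ∂ν := by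
    rw [lintegral_finset_sum _ (fun c hc => measurable_one.indicator (hCmeas c hc))]
    exact Finset.sum_congr rfl fun c hc => (lintegral_indicator_one (hCmeas c hc)).symm
  rw [h1, h2]
  refine lintegral_mono fun p => ?_
  by_cases hp : p ∈ probSimplex k
  · -- LHS equals card (Sstar p)
    have hL : ∑ c ∈ D, (A c).indicator 1 p = ((Sstar p).card : ℝ≥0∞) := by
      have heq : ∀ c ∈ D, (A c).indicator (1 : EuclideanSpace ℝ (Fin k) → ℝ≥0∞) p
          = if c ∈ Sstar p then 1 else 0 := by
        intro c hc
        by_cases hcs : c ∈ Sstar p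
        · rw [Set.indicator_of_mem (show p ∈ A c from ⟨hp, hcs⟩), if_pos hcs]; rfl
        · rw [Set.indicator_of_notMem (fun h => hcs h.2), if_neg hcs]
      rw [Finset.sum_congr rfl heq, ← Finset.sum_filter,
        Finset.sum_const, Finset.filter_mem_eq_inter,
        Finset.inter_eq_right.mpr (hSsub p hp)]
      simp
    have hR : (((D.filter fun c => p ∈ C c).card : ℕ) : ℝ≥0∞)
        ≤ ∑ c ∈ D, (C c).indicator 1 p := by
      have heq : ∀ c ∈ D.filter fun c => p ∈ C c,
          (C c).indicator (1 : EuclideanSpace ℝ (Fin k) → ℝ≥0∞) p = 1 := by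
        intro c hc
        rw [Set.indicator_of_mem (Finset.mem_filter.mp hc).2]; rfl
      calc (((D.filter fun c => p ∈ C c).card : ℕ) : ℝ≥0∞)
          = ∑ c ∈ D.filter fun c => p ∈ C c, (C c).indicator 1 p := by
            rw [Finset.sum_congr rfl heq]; simp
        _ ≤ ∑ c ∈ D, (C c).indicator 1 p :=
            Finset.sum_le_sum_of_subset (Finset.filter_subset _ _)
    refine le_trans ?_ hR
    rw [hL]
    have hmass : 1 - δ ≤ Pmass k p (D.filter fun c => p ∈ C c) := by
      have htot : Pmass k p D = 1 := Pmass_total k n p hp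
      have hsplit : Pmass k p (D.filter fun c => p ∈ C c)
          + Pmass k p (D.filter fun c => ¬ p ∈ C c) = Pmass k p D := by
        simp only [Pmass]
        exact Finset.sum_filter_add_sum_filter_not _ _ _
      have hconf := hCconf p hp
      linarith
    exact_mod_cast hSmin p hp _ (Finset.filter_subset _ _) hmass
  · -- LHS is zero
    have hL : ∑ c ∈ D, (A c).indicator 1 p = (0 : ℝ≥0∞) :=
      Finset.sum_eq_zero fun c _ => Set.indicator_of_notMem (fun h => hp h.1) _
    rw [hL]
    exact zero_le
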